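/- arXiv:2211.00411 — 7 statements merged into one kernel-verified Lean document; each statement's English description precedes it below -/
import Mathlib

section
/- Let X be a nonempty zero-dimensional T1 topological space, let 2 = {0,1} carry the discrete topology, let C(X,2) be the set of continuous maps from X to 2, and let e : X → 2^{C(X,2)} be the evaluation map e(x)(f) = f(x). Then e is a homeomorphic embedding, the closure K of e[X] in the product space 2^{C(X,2)} is a compact zero-dimensional Hausdorff space, and the pair ⟨K, e⟩ is a Banaschewski compactification of X: for every compact zero-dimensional T1 space Z and every continuous g : X → Z there exists a continuous g̃ : K → Z with g̃ ∘ e = g. -/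
/-!
The clopen sets of `X` are exactly the sets `f⁻¹{true}` with `f : X → 2` continuous; as they form
a basis, the evaluation map induces the topology of `X`, and it is injective since `X` is `T₀`. The closure `K`
of its image is closed in the compact, Hausdorff, totally disconnected cube, hence a Stone space.
A map `g : X → Z` induces the continuous map `u ↦ (h ↦ u (h ∘ g))` between the cubes, intertwining
the two evaluation maps. It sends `e_X[X]` into `e_Z[Z]`, which is compact and hence closed when
`Z` is compact, so it sends `K` into `e_Z[Z] ≅ Z`; this is the extension of `g`.
-/

open Topology TopologicalSpace Set

universe u v

/-- The evaluation map `x ↦ (f ↦ f x)` from `X` into the Cantor cube `2^{C(X,2)}`,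
where `2 = Bool` carries the discrete topology. -/
def boolEval (X : Type u) [TopologicalSpace X] : X → (C(X, Bool) → Bool) :=
  fun x f => f x

/-- The corestriction of the evaluation map to the closure of its range. -/
def boolEvalK (X : Type u) [TopologicalSpace X] :
    X → ↥(closure (Set.range (boolEval X))) :=
  fun x => ⟨boolEval X x, subset_closure ⟨x, rfl⟩⟩

section BoolEval

variable {X : Type u} [TopologicalSpace X] {Z : Type v} [TopologicalSpace Z]

theorem continuous_boolEval : Continuous (boolEval X) :=
  continuous_pi fun f => f.continuous

theorem isInducing_boolEval (hX : IsTopologicalBasis {s : Set X | IsClopen s}) :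
    IsInducing (boolEval X) := by
  refine ⟨le_antisymm (continuous_iff_le_induced.mp continuous_boolEval) ?_⟩
  refine (le_generateFrom fun s (hs : IsClopen s) => ?_).trans hX.eq_generateFrom.ge
  let f : C(X, Bool) := ⟨s.boolIndicator, (continuous_boolIndicator_iff_isClopen s).mpr hs⟩
  exact ⟨(fun u => u f) ⁻¹' {true}, (continuous_apply f).isOpen_preimage _ (isOpen_discrete _),
    preimage_boolIndicator_true s⟩

theorem isEmbedding_boolEval [T0Space X] (hX : IsTopologicalBasis {s : Set X | IsClopen s}) :
    IsEmbedding (boolEval X) :=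
  (isInducing_boolEval hX).isEmbedding

theorem denseRange_boolEvalK : DenseRange (boolEvalK X) :=
  Subtype.dense_iff.mpr (by rw [← range_comp]; exact subset_rfl)

def boolCubeMap (g : C(X, Z)) : C(C(X, Bool) → Bool, C(Z, Bool) → Bool) where
  toFun u h := u (h.comp g)
  continuous_toFun := continuous_pi fun _ => continuous_apply _

theorem boolCubeMap_boolEval (g : C(X, Z)) (x : X) :
    boolCubeMap g (boolEval X x) = boolEval Z (g x) :=
  rfl

theorem mapsTo_boolCubeMap_closure_range [CompactSpace Z] (g : C(X, Z)) :
    MapsTo (boolCubeMap g) (closure (range (boolEval X))) (range (boolEval Z)) := by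
  have hrange : MapsTo (boolCubeMap g) (range (boolEval X)) (range (boolEval Z)) := by
    rintro _ ⟨x, rfl⟩
    exact ⟨g x, rfl⟩
  exact hrange.closure_left (boolCubeMap g).continuous
    (isCompact_range continuous_boolEval).isClosed

theorem exists_extend_boolEvalK [CompactSpace Z] [T0Space Z]
    (hZ : IsTopologicalBasis {s : Set Z | IsClopen s}) (g : C(X, Z)) :
    ∃ g' : C(closure (range (boolEval X)), Z), ∀ x, g' (boolEvalK X x) = g x := by
  let eZ := (isEmbedding_boolEval hZ).toHomeomorph
  let Φ : C(closure (range (boolEval X)), range (boolEval Z)) :=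
    ⟨(mapsTo_boolCubeMap_closure_range g).restrict,
      (boolCubeMap g).continuous.restrict (mapsTo_boolCubeMap_closure_range g)⟩
  refine ⟨(eZ.symm : C(range (boolEval Z), Z)).comp Φ, fun x => ?_⟩
  have hΦ : Φ (boolEvalK X x) = eZ (g x) := Subtype.ext (boolCubeMap_boolEval g x)
  simp [hΦ]

end BoolEval

theorem stmt0_general (X : Type u) [TopologicalSpace X] [T1Space X]
    (hzd : IsTopologicalBasis {s : Set X | IsClopen s}) :
    IsEmbedding (boolEval X) ∧
    IsCompact (closure (Set.range (boolEval X))) ∧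
    T2Space ↥(closure (Set.range (boolEval X))) ∧
    IsTopologicalBasis {s : Set ↥(closure (Set.range (boolEval X))) | IsClopen s} ∧
    DenseRange (boolEvalK X) ∧
    (∀ (Z : Type v) [TopologicalSpace Z] [CompactSpace Z] [T1Space Z],
      IsTopologicalBasis {s : Set Z | IsClopen s} →
      ∀ g : C(X, Z), ∃ g' : C(↥(closure (Set.range (boolEval X))), Z),
        ∀ x : X, g' (boolEvalK X x) = g x) := by
  have hK : IsCompact (closure (range (boolEval X))) := isClosed_closure.isCompact
  have : CompactSpace (closure (range (boolEval X))) := isCompact_iff_compactSpace.mp hK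
  exact ⟨isEmbedding_boolEval hzd, hK, inferInstance, isTopologicalBasis_isClopen,
    denseRange_boolEvalK, fun Z _ _ _ hZ g => exists_extend_boolEvalK hZ g⟩

/-- For a nonempty zero-dimensional `T₁` space `X`, the evaluation map
`e : X → 2^{C(X,2)}` is a homeomorphic embedding, the closure `K` of its image is a
compact zero-dimensional Hausdorff space, `e` maps `X` onto a dense subspace of `K`,
and `⟨K, e⟩` is a Banaschewski compactification of `X`: every continuous map from `X`
to a compact zero-dimensional `T₁` space `Z` extends continuously over `K`. -/
theorem stmt0 (X : Type u) [TopologicalSpace X] [Nonempty X] [T1Space X]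
    (hzd : IsTopologicalBasis {s : Set X | IsClopen s}) :
    IsEmbedding (boolEval X) ∧
    IsCompact (closure (Set.range (boolEval X))) ∧
    T2Space ↥(closure (Set.range (boolEval X))) ∧
    IsTopologicalBasis {s : Set ↥(closure (Set.range (boolEval X))) | IsClopen s} ∧
    DenseRange (boolEvalK X) ∧
    (∀ (Z : Type v) [TopologicalSpace Z] [CompactSpace Z] [T1Space Z],
      IsTopologicalBasis {s : Set Z | IsClopen s} →
      ∀ g : C(X, Z), ∃ g' : C(↥(closure (Set.range (boolEval X))), Z),
        ∀ x : X, g' (boolEvalK X x) = g x) :=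
  stmt0_general X hzd
end

section
/- Let X be a nonempty Tychonoff (completely regular T1) space, let C*(X) denote the set of bounded continuous real-valued functions on X, and let e : X → ℝ^{C*(X)} be the evaluation map e(x)(f) = f(x). Let β^fX be the closure of e[X] in the product space ℝ^{C*(X)}, so that e is a homeomorphic embedding of X onto a dense subspace of β^fX. Then X is strongly zero-dimensional if and only if β^fX is strongly zero-dimensional. -/
open Topology TopologicalSpace Set

universe u

/-- A space is strongly zero-dimensional if any two disjoint zero-sets can be
separated by a clopen set. -/
def StronglyZeroDimensional (X : Type*) [TopologicalSpace X] : Prop :=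
  ∀ f g : X → ℝ, Continuous f → Continuous g → Disjoint (f ⁻¹' {0}) (g ⁻¹' {0}) →
    ∃ U : Set X, IsClopen U ∧ f ⁻¹' {0} ⊆ U ∧ Disjoint U (g ⁻¹' {0})

/-- The evaluation map `x ↦ (f ↦ f x)` from `X` into `ℝ^{C*(X)}`, where `C*(X)` is
the set of bounded continuous real-valued functions on `X`. -/
def bcfEval (X : Type u) [TopologicalSpace X] : X → (BoundedContinuousFunction X ℝ → ℝ) :=
  fun x f => f x

namespace SZDAux

variable (X : Type u) [TopologicalSpace X]

lemma continuous_bcfEval : Continuous (bcfEval X) :=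
  continuous_pi fun f => f.continuous

/-- The corestriction of the evaluation map to the closure of its range. -/
def eK (x : X) : ↥(closure (Set.range (bcfEval X))) :=
  ⟨bcfEval X x, subset_closure (mem_range_self x)⟩

lemma continuous_eK : Continuous (eK X) :=
  (continuous_bcfEval X).subtype_mk _

lemma exists_eK_mem {W : Set ↥(closure (Set.range (bcfEval X)))} (hW : IsOpen W)
    {p : ↥(closure (Set.range (bcfEval X)))} (hp : p ∈ W) : ∃ x, eK X x ∈ W := by
  rw [isOpen_induced_iff] at hW
  obtain ⟨W₀, hW₀, rfl⟩ := hW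
  have hcl : (p : BoundedContinuousFunction X ℝ → ℝ) ∈ closure (Set.range (bcfEval X)) := p.2
  rw [mem_closure_iff] at hcl
  obtain ⟨y, hy1, x, rfl⟩ := hcl W₀ hW₀ hp
  exact ⟨x, hy1⟩

lemma isCompact_K : IsCompact (closure (Set.range (bcfEval X))) := by
  refine (isCompact_univ_pi fun f : BoundedContinuousFunction X ℝ =>
      isCompact_Icc (a := -‖f‖) (b := ‖f‖)).of_isClosed_subset isClosed_closure ?_
  refine closure_minimal ?_ (isClosed_set_pi fun f _ => isClosed_Icc)
  rintro _ ⟨x, rfl⟩ f -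
  have := f.norm_coe_le_norm x
  rw [Real.norm_eq_abs] at this
  exact abs_le.mp this

end SZDAux

open SZDAux

/-- Let `X` be a nonempty Tychonoff space and let `β^f X` be the closure of the image
of the evaluation map `X → ℝ^{C*(X)}`.  Then `X` is strongly zero-dimensional if and
only if `β^f X` is strongly zero-dimensional. -/
theorem stmt1 (X : Type u) [TopologicalSpace X] [Nonempty X] [T1Space X]
    [CompletelyRegularSpace X] :
    StronglyZeroDimensional X ↔
      StronglyZeroDimensional ↥(closure (Set.range (bcfEval X))) := by
  classical
  set K := ↥(closure (Set.range (bcfEval X))) with hKdef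
  constructor
  · -- forward direction
    intro hX F G hF hG hFG
    haveI : CompactSpace K := isCompact_iff_compactSpace.mp (isCompact_K X)
    obtain ⟨Φ, hΦ0, hΦ1, -⟩ := exists_continuous_zero_one_of_isClosed
      (isClosed_singleton.preimage hF) (isClosed_singleton.preimage hG) hFG
    set φ : X → ℝ := fun x => Φ (eK X x) with hφdef
    have hφc : Continuous φ := Φ.continuous.comp (continuous_eK X)
    set f₁ : X → ℝ := fun x => max (φ x - 1/3) 0 with hf₁def
    set g₁ : X → ℝ := fun x => max (2/3 - φ x) 0 with hg₁def
    have hf₁z : ∀ x, f₁ x = 0 ↔ φ x ≤ 1/3 := by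
      intro x; simp [hf₁def, max_eq_right_iff, sub_nonpos]
    have hg₁z : ∀ x, g₁ x = 0 ↔ 2/3 ≤ φ x := by
      intro x; simp [hg₁def, max_eq_right_iff, sub_nonpos]
    obtain ⟨U, hU, hUf, hUg⟩ := hX f₁ g₁ ((hφc.sub continuous_const).max continuous_const)
      ((continuous_const.sub hφc).max continuous_const) (by
        rw [Set.disjoint_left]
        intro x hx1 hx2
        have h1 : φ x ≤ 1/3 := (hf₁z x).mp hx1
        have h2 : 2/3 ≤ φ x := (hg₁z x).mp hx2
        linarith)
    -- indicator function of U
    set χ : X → ℝ := fun x => if x ∈ U then 1 else 0 with hχdef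
    have hχc : Continuous χ := by
      refine continuous_if (fun a ha => ?_) continuous_const.continuousOn
        continuous_const.continuousOn
      rw [show {a | a ∈ U} = U from rfl, hU.frontier_eq] at ha
      exact absurd ha (notMem_empty a)
    have hχval : ∀ x, χ x = 0 ∨ χ x = 1 := by
      intro x; by_cases hx : x ∈ U <;> simp [hχdef, hx]
    set χb : BoundedContinuousFunction X ℝ :=
      BoundedContinuousFunction.ofNormedAddCommGroup χ hχc 1 (by
        intro x
        rcases hχval x with h | h <;> simp [h]) with hχbdef
    have hχb : ∀ x, χb x = χ x := fun x => rfl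
    set Χ : K → ℝ := fun p => (p : BoundedContinuousFunction X ℝ → ℝ) χb with hΧdef
    have hΧc : Continuous Χ := (continuous_apply χb).comp continuous_subtype_val
    have hΧe : ∀ x, Χ (eK X x) = χ x := fun x => rfl
    have hΧval : ∀ p : K, Χ p = 0 ∨ Χ p = 1 := by
      intro p
      have hev : Continuous (fun q : BoundedContinuousFunction X ℝ → ℝ => q χb) :=
        continuous_apply χb
      have h01 : IsClosed ({0, 1} : Set ℝ) := by
        rw [Set.insert_eq]; exact isClosed_singleton.union isClosed_singleton
      have hmem : (fun q : BoundedContinuousFunction X ℝ → ℝ => q χb) (p : _) ∈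
          closure ((fun q : BoundedContinuousFunction X ℝ → ℝ => q χb) ''
            Set.range (bcfEval X)) :=
        (image_closure_subset_closure_image hev) ⟨(p : _), p.2, rfl⟩
      have hsub : (fun q : BoundedContinuousFunction X ℝ → ℝ => q χb) ''
          Set.range (bcfEval X) ⊆ ({0, 1} : Set ℝ) := by
        rintro _ ⟨_, ⟨x, rfl⟩, rfl⟩
        rcases hχval x with h | h <;> simp [bcfEval, hχb, h]
      have := closure_minimal hsub h01 hmem
      simpa [hΧdef] using this
    refine ⟨Χ ⁻¹' {1}, ⟨isClosed_singleton.preimage hΧc, ?_⟩, ?_, ?_⟩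
    · have : Χ ⁻¹' {1} = Χ ⁻¹' (Set.Ioi (1/2 : ℝ)) := by
        ext p
        rcases hΧval p with h | h <;> simp [h] <;> norm_num
      rw [this]
      exact isOpen_Ioi.preimage hΧc
    · -- F ⁻¹' {0} ⊆ Χ ⁻¹' {1}
      intro p hp
      have hΦp : Φ p = 0 := hΦ0 hp
      rcases hΧval p with h | h
      · exfalso
        set W : Set K := Φ ⁻¹' (Set.Iio (1/3 : ℝ)) ∩ Χ ⁻¹' (Set.Iio (1/2 : ℝ)) with hWdef
        have hWopen : IsOpen W :=
          (isOpen_Iio.preimage Φ.continuous).inter (isOpen_Iio.preimage hΧc)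
        have hpW : p ∈ W := by
          constructor <;> simp [hΦp, h] <;> norm_num
        obtain ⟨x, hx1, hx2⟩ := exists_eK_mem X hWopen hpW
        have hφx : φ x < 1/3 := hx1
        have hxU : x ∈ U := hUf ((hf₁z x).mpr hφx.le)
        have hx2' : Χ (eK X x) < 1/2 := hx2
        have : Χ (eK X x) = 1 := by rw [hΧe]; simp [hχdef, hxU]
        rw [this] at hx2'
        norm_num at hx2'
      · exact h
    · -- Disjoint (Χ ⁻¹' {1}) (G ⁻¹' {0})
      rw [Set.disjoint_left]
      intro p hp1 hp2
      have hΦp : Φ p = 1 := hΦ1 hp2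
      have hΧp : Χ p = 1 := hp1
      set W : Set K := Φ ⁻¹' (Set.Ioi (2/3 : ℝ)) ∩ Χ ⁻¹' (Set.Ioi (1/2 : ℝ)) with hWdef
      have hWopen : IsOpen W :=
        (isOpen_Ioi.preimage Φ.continuous).inter (isOpen_Ioi.preimage hΧc)
      have hpW : p ∈ W := by
        constructor <;> simp [hΦp, hΧp] <;> norm_num
      obtain ⟨x, hx1, hx2⟩ := exists_eK_mem X hWopen hpW
      have hφx : (2/3 : ℝ) < φ x := hx1
      have hxg : g₁ x = 0 := (hg₁z x).mpr hφx.le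
      have hxU : x ∈ U := by
        have hx2' : (1/2:ℝ) < Χ (eK X x) := hx2
        have hΧx : Χ (eK X x) = 1 := by
          rcases hχval x with h | h
          · exfalso; rw [hΧe x, h] at hx2'; norm_num at hx2'
          · rw [hΧe x, h]
        by_contra hxU
        rw [hΧe x] at hΧx
        simp [hχdef, hxU] at hΧx
      exact Set.disjoint_left.mp hUg hxU hxg
  · -- reverse direction
    intro hK f g hf hg hfg
    have hd : ∀ x, 0 < |f x| + |g x| := by
      intro x
      rcases eq_or_ne (f x) 0 with h | h
      · have : g x ≠ 0 := by
          intro hgx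
          exact Set.disjoint_left.mp hfg (by simpa using h) (by simpa using hgx)
        have := abs_pos.mpr this
        positivity
      · have := abs_pos.mpr h
        positivity
    set h : X → ℝ := fun x => |f x| / (|f x| + |g x|) with hhdef
    have hhc : Continuous h :=
      (hf.abs).div (hf.abs.add hg.abs) fun x => (hd x).ne'
    have hh01 : ∀ x, h x ∈ Set.Icc (0:ℝ) 1 := by
      intro x
      constructor
      · exact div_nonneg (abs_nonneg _) (hd x).le
      · rw [div_le_one (hd x)]
        nlinarith [abs_nonneg (g x)]
    set hb : BoundedContinuousFunction X ℝ :=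
      BoundedContinuousFunction.ofNormedAddCommGroup h hhc 1 (by
        intro x
        rw [Real.norm_eq_abs, abs_le]
        exact ⟨by linarith [(hh01 x).1], (hh01 x).2⟩) with hbdef
    set H : K → ℝ := fun p => (p : BoundedContinuousFunction X ℝ → ℝ) hb with hHdef
    have hHc : Continuous H := (continuous_apply hb).comp continuous_subtype_val
    have hHe : ∀ x, H (eK X x) = h x := fun x => rfl
    obtain ⟨U, hU, hUH, hUH'⟩ := hK H (fun p => H p - 1) hHc (hHc.sub continuous_const) (by
      rw [Set.disjoint_left]
      intro p hp1 hp2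
      simp only [Set.mem_preimage, Set.mem_singleton_iff] at hp1 hp2
      rw [hp1] at hp2
      norm_num at hp2)
    refine ⟨eK X ⁻¹' U, hU.preimage (continuous_eK X), ?_, ?_⟩
    · intro x hx
      have hfx : f x = 0 := hx
      have : H (eK X x) = 0 := by
        rw [hHe, hhdef]; simp [hfx]
      exact hUH (by simpa using this)
    · rw [Set.disjoint_left]
      intro x hx1 hx2
      have hgx : g x = 0 := hx2
      have hfx : f x ≠ 0 := by
        intro hfx
        exact Set.disjoint_left.mp hfg (by simpa using hfx) (by simpa using hgx)
      have : H (eK X x) - 1 = 0 := by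
        rw [hHe, hhdef]
        simp only
        rw [hgx, abs_zero, add_zero, div_self (abs_ne_zero.mpr hfx)]
        ring
      exact Set.disjoint_left.mp hUH' hx1 (by simpa using this)
end

section
/- For every topological space X and every bounded continuous function f : X → ℝ, f belongs to U*_{ℵ0}(X) if and only if for every ε > 0 there exists a continuous function g : X → ℝ_disc (that is, g : X → ℝ is continuous when ℝ carries the discrete topology) with bounded range such that sup_{x∈X} |f(x) − g(x)| ≤ ε. Equivalently, U*_{ℵ0}(X) is the closure of C*(X, ℝ_disc) in the space of bounded continuous real-valued functions on X equipped with the topology of uniform convergence (the supremum metric). -/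
open Topology TopologicalSpace Set

/-!
Given a countable clopen cover `A₀, A₁, …` on whose members `f` oscillates by at most `ε`,
send `x` to the value of `f` at a fixed point of the first `Aₙ` containing `x`; the index of
that first member is locally constant because its fibres `Aₙ \ (A₀ ∪ ⋯ ∪ Aₙ₋₁)` are clopen.
Conversely, if `g` is locally constant and `ε/3`-close to `f`, the fibres of
`x ↦ ⌊g x / (ε/3)⌋` form a countable clopen cover on whose members `f` oscillates by at most `ε`.
-/

section

variable {X : Type*} [TopologicalSpace X]

open scoped Classical in
theorem isLocallyConstant_nat_find_mem {A : ℕ → Set X} (hA : ∀ n, IsClopen (A n))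
    (hcov : ∀ x, ∃ n, x ∈ A n) : IsLocallyConstant fun x => Nat.find (hcov x) := by
  refine IsLocallyConstant.iff_isOpen_fiber.2 fun n => ?_
  have hfiber : (fun x => Nat.find (hcov x)) ⁻¹' {n} = A n ∩ ⋂ m ∈ Finset.range n, (A m)ᶜ := by
    ext x
    simp [Nat.find_eq_iff]
  rw [hfiber]
  exact (hA n).isOpen.inter (isOpen_biInter_finset fun m _ => (hA m).compl.isOpen)

theorem exists_isLocallyConstant_forall_mem_image_of_sUnion_eq_univ {Y : Type*} (f : X → Y)
    {𝒜 : Set (Set X)} (h𝒜 : 𝒜.Countable) (hcov : ⋃₀ 𝒜 = univ)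
    (hclopen : ∀ A ∈ 𝒜, IsClopen A) :
    ∃ g : X → Y, IsLocallyConstant g ∧ ∀ x, ∃ A ∈ 𝒜, x ∈ A ∧ g x ∈ f '' A := by
  classical
  rcases isEmpty_or_nonempty X with hX | hX
  · exact ⟨f, .of_constant f fun x => isEmptyElim x, fun x => isEmptyElim x⟩
  have h𝒜ne : 𝒜.Nonempty := by
    obtain ⟨A, hA, -⟩ := mem_sUnion.1 (hcov ▸ mem_univ hX.some)
    exact ⟨A, hA⟩
  obtain ⟨A, rfl⟩ := h𝒜.exists_eq_range h𝒜ne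
  have hmem : ∀ x, ∃ n, x ∈ A n := by simpa [eq_univ_iff_forall] using hcov
  refine ⟨fun x => f (Classical.epsilon (· ∈ A (Nat.find (hmem x)))),
    (isLocallyConstant_nat_find_mem (fun n => hclopen _ (mem_range_self n)) hmem).comp
      fun n => f (Classical.epsilon (· ∈ A n)),
    fun x => ⟨_, mem_range_self _, Nat.find_spec (hmem x), _, ?_, rfl⟩⟩
  exact Classical.epsilon_spec ⟨x, Nat.find_spec (hmem x)⟩

theorem abs_sub_lt_of_floor_div_eq_floor_div {a b δ : ℝ} (hδ : 0 < δ)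
    (h : ⌊a / δ⌋ = ⌊b / δ⌋) : |a - b| < δ := by
  have := Int.abs_sub_lt_one_of_floor_eq_floor h
  rwa [← sub_div, abs_div, abs_of_pos hδ, div_lt_one hδ] at this

theorem IsLocallyConstant.exists_countable_clopen_cover_abs_sub_lt {g : X → ℝ}
    (hg : IsLocallyConstant g) {δ : ℝ} (hδ : 0 < δ) :
    ∃ 𝒜 : Set (Set X), 𝒜.Countable ∧ ⋃₀ 𝒜 = univ ∧
      ∀ A ∈ 𝒜, IsClopen A ∧ ∀ x ∈ A, ∀ y ∈ A, |g x - g y| < δ := by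
  set k : X → ℤ := fun x => ⌊g x / δ⌋
  refine ⟨range fun n => {x | k x = n}, countable_range _, ?_, ?_⟩
  · exact eq_univ_of_forall fun x => mem_sUnion.2 ⟨_, mem_range_self (k x), rfl⟩
  · rintro _ ⟨n, rfl⟩
    refine ⟨(hg.comp fun a => ⌊a / δ⌋).isClopen_fiber n, fun x hx y hy => ?_⟩
    exact abs_sub_lt_of_floor_div_eq_floor_div hδ (hx.trans hy.symm)

end

theorem stmt2_general {X : Type*} [TopologicalSpace X] (f : X → ℝ)
    (hb : ∃ M : ℝ, ∀ x : X, |f x| ≤ M) :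
    (∀ ε : ℝ, 0 < ε → ∃ 𝒜 : Set (Set X), 𝒜.Countable ∧ ⋃₀ 𝒜 = Set.univ ∧
        ∀ A ∈ 𝒜, IsClopen A ∧ ∀ x ∈ A, ∀ y ∈ A, |f x - f y| ≤ ε) ↔
    (∀ ε : ℝ, 0 < ε → ∃ g : X → ℝ, IsLocallyConstant g ∧
        (∃ M : ℝ, ∀ x : X, |g x| ≤ M) ∧ ∀ x : X, |f x - g x| ≤ ε) := by
  obtain ⟨M, hM⟩ := hb
  constructor
  · intro H ε hε
    obtain ⟨𝒜, h𝒜, hcov, hosc⟩ := H ε hε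
    obtain ⟨g, hg, hgf⟩ := exists_isLocallyConstant_forall_mem_image_of_sUnion_eq_univ f h𝒜 hcov
      fun A hA => (hosc A hA).1
    refine ⟨g, hg, ⟨M, fun x => ?_⟩, fun x => ?_⟩ <;>
      obtain ⟨A, hA, hxA, y, hyA, hgx⟩ := hgf x <;> rw [← hgx]
    · exact hM y
    · exact (hosc A hA).2 x hxA y hyA
  · intro H ε hε
    obtain ⟨g, hg, -, hfg⟩ := H (ε / 3) (by positivity)
    obtain ⟨𝒜, h𝒜, hcov, hosc⟩ :=
      hg.exists_countable_clopen_cover_abs_sub_lt (δ := ε / 3) (by positivity)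
    refine ⟨𝒜, h𝒜, hcov, fun A hA => ⟨(hosc A hA).1, fun x hx y hy => ?_⟩⟩
    calc |f x - f y| ≤ |f x - g x| + (|g x - g y| + |g y - f y|) :=
          (abs_sub_le _ (g x) _).trans (add_le_add le_rfl (abs_sub_le _ _ _))
      _ ≤ ε / 3 + (ε / 3 + ε / 3) := by
          gcongr
          exacts [hfg x, ((hosc A hA).2 x hx y hy).le, abs_sub_comm (f y) (g y) ▸ hfg y]
      _ = ε := by ring

/-- For a topological space `X` and a bounded continuous function `f : X → ℝ`,
`f ∈ U*_{ℵ₀}(X)` (i.e. for every `ε > 0` there is a countable clopen cover of `X`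
on each member of which the oscillation of `f` is at most `ε`) if and only if for
every `ε > 0` there is a continuous function `g` from `X` to `ℝ` with the discrete
topology (i.e. a locally constant function) with bounded range such that
`|f x − g x| ≤ ε` for all `x`; equivalently, `U*_{ℵ₀}(X)` is the closure of
`C*(X, ℝ_disc)` in the topology of uniform convergence. -/
theorem stmt2 {X : Type*} [TopologicalSpace X] (f : X → ℝ)
    (hf : Continuous f) (hb : ∃ M : ℝ, ∀ x : X, |f x| ≤ M) :
    (∀ ε : ℝ, 0 < ε → ∃ 𝒜 : Set (Set X), 𝒜.Countable ∧ ⋃₀ 𝒜 = Set.univ ∧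
        ∀ A ∈ 𝒜, IsClopen A ∧ ∀ x ∈ A, ∀ y ∈ A, |f x - f y| ≤ ε) ↔
    (∀ ε : ℝ, 0 < ε → ∃ g : X → ℝ, IsLocallyConstant g ∧
        (∃ M : ℝ, ∀ x : X, |g x| ≤ M) ∧ ∀ x : X, |f x - g x| ≤ ε) :=
  stmt2_general f hb
end

section
/- Let X be a completely regular topological space. Then X is strongly zero-dimensional if and only if U*_{ℵ0}(X) = C*(X), i.e. if and only if every bounded continuous function f : X → ℝ has the property that for every ε > 0 there exists a countable cover of X by clopen sets on each of which the oscillation of f is at most ε. -/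
open Topology TopologicalSpace Set

/-- A completely regular space `X` is strongly zero-dimensional if and only if
`U*_{ℵ₀}(X) = C*(X)`, i.e. every bounded continuous `f : X → ℝ` has the property
that for every `ε > 0` there is a countable clopen cover of `X` on each member of
which the oscillation of `f` is at most `ε`. -/
theorem stmt3 {X : Type*} [TopologicalSpace X] [CompletelyRegularSpace X] :
    StronglyZeroDimensional X ↔
    ∀ f : X → ℝ, Continuous f → (∃ M : ℝ, ∀ x : X, |f x| ≤ M) →
      ∀ ε : ℝ, 0 < ε → ∃ 𝒜 : Set (Set X), 𝒜.Countable ∧ ⋃₀ 𝒜 = Set.univ ∧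
        ∀ A ∈ 𝒜, IsClopen A ∧ ∀ x ∈ A, ∀ y ∈ A, |f x - f y| ≤ ε := by
  constructor
  · -- forward
    intro sz f hf _ ε hε
    set δ := ε / 2 with hδ
    have hδpos : 0 < δ := by positivity
    have key : ∀ n : ℤ, ∃ U : Set X, IsClopen U ∧
        (∀ x, f x ≤ n * δ → x ∈ U) ∧ ∀ x ∈ U, f x < (n + 1) * δ := by
      intro n
      have hdisj0 : Disjoint ((fun x => max (f x - n * δ) 0) ⁻¹' {0})
          ((fun x => min (f x - (n + 1) * δ) 0) ⁻¹' {0}) := by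
        rw [Set.disjoint_left]
        intro x hx1 hx2
        simp only [mem_preimage, mem_singleton_iff, max_eq_right_iff,
          min_eq_right_iff] at hx1 hx2
        have h1 : ((n : ℝ) + 1) * δ = n * δ + δ := by ring
        linarith
      obtain ⟨U, hU, hsub, hdis⟩ := sz (fun x => max (f x - n * δ) 0)
        (fun x => min (f x - (n + 1) * δ) 0)
        ((hf.sub continuous_const).max continuous_const)
        ((hf.sub continuous_const).min continuous_const) hdisj0
      refine ⟨U, hU, ?_, ?_⟩
      · intro x hx
        apply hsub
        simp only [mem_preimage, mem_singleton_iff]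
        exact max_eq_right (by linarith)
      · intro x hx
        by_contra hcon
        push_neg at hcon
        refine Set.disjoint_left.mp hdis hx ?_
        simp only [mem_preimage, mem_singleton_iff]
        exact min_eq_right (by linarith)
    choose U hUclopen hUsub hUlt using key
    refine ⟨Set.range (fun n : ℤ => U (n + 1) \ U n), countable_range _, ?_, ?_⟩
    · apply Set.eq_univ_of_forall
      intro x
      have hne : ∃ n : ℤ, x ∈ U n := by
        refine ⟨⌈f x / δ⌉, hUsub _ _ ?_⟩
        rw [← div_le_iff₀ hδpos]
        exact Int.le_ceil _
      have hbdd : ∃ b : ℤ, ∀ n : ℤ, x ∈ U n → b ≤ n := by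
        refine ⟨⌊f x / δ⌋, fun n hn => ?_⟩
        have hlt := hUlt n x hn
        have h2 : ⌊f x / δ⌋ < n + 1 := by
          apply Int.floor_lt.mpr
          push_cast
          rw [div_lt_iff₀ hδpos]; linarith
        omega
      obtain ⟨m, hm, hleast⟩ := Int.exists_least_of_bdd hbdd hne
      refine ⟨U m \ U (m - 1), ⟨m - 1, by simp⟩, hm, fun hx => ?_⟩
      have := hleast _ hx
      omega
    · rintro A ⟨n, rfl⟩
      refine ⟨(hUclopen (n + 1)).diff (hUclopen n), ?_⟩
      intro x hx y hy
      have hx1 : f x < ((n : ℝ) + 1 + 1) * δ := by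
        have := hUlt (n + 1) x hx.1; push_cast at this; exact this
      have hx2 : (n : ℝ) * δ < f x := by
        by_contra hc; push_neg at hc; exact hx.2 (hUsub n x hc)
      have hy1 : f y < ((n : ℝ) + 1 + 1) * δ := by
        have := hUlt (n + 1) y hy.1; push_cast at this; exact this
      have hy2 : (n : ℝ) * δ < f y := by
        by_contra hc; push_neg at hc; exact hy.2 (hUsub n y hc)
      rw [abs_sub_le_iff]
      have hεδ : ε = 2 * δ := by rw [hδ]; ring
      constructor <;> nlinarith
  · -- reverse
    intro hyp f g hf hg hdisj
    have hfg : ∀ x, f x = 0 → g x ≠ 0 := by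
      intro x hx hgx
      exact Set.disjoint_left.mp hdisj (by simpa using hx) (by simpa using hgx)
    have hpos : ∀ x, 0 < |f x| + |g x| := by
      intro x
      rcases eq_or_ne (f x) 0 with hx | hx
      · have : g x ≠ 0 := hfg x hx
        have := abs_pos.mpr this
        have := abs_nonneg (f x)
        linarith
      · have := abs_pos.mpr hx
        have := abs_nonneg (g x)
        linarith
    set h : X → ℝ := fun x => |f x| / (|f x| + |g x|) with hh_def
    have hh : Continuous h := hf.abs.div (hf.abs.add hg.abs) fun x => (hpos x).ne'
    have hbound : ∀ x, |h x| ≤ 1 := by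
      intro x
      rw [abs_of_nonneg (div_nonneg (abs_nonneg _) (hpos x).le)]
      rw [div_le_one (hpos x)]
      exact le_add_of_nonneg_right (abs_nonneg _)
    obtain ⟨𝒜, hc, hcov, hprops⟩ := hyp h hh ⟨1, hbound⟩ (1/2) (by norm_num)
    obtain ⟨A, hA⟩ := (hc.insert (∅ : Set X)).exists_eq_range
      ⟨∅, mem_insert _ _⟩
    have props' : ∀ n, IsClopen (A n) ∧
        ∀ x ∈ A n, ∀ y ∈ A n, |h x - h y| ≤ 1/2 := by
      intro n
      have : A n ∈ insert (∅ : Set X) 𝒜 := hA ▸ mem_range_self n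
      rcases this with hAe | hAm
      · rw [hAe]; exact ⟨isClopen_empty, by simp⟩
      · exact hprops _ hAm
    have cover' : ∀ x : X, ∃ n, x ∈ A n := by
      intro x
      have : x ∈ ⋃₀ 𝒜 := hcov ▸ mem_univ x
      obtain ⟨s, hs, hxs⟩ := this
      have : s ∈ Set.range A := hA ▸ mem_insert_of_mem _ hs
      obtain ⟨n, rfl⟩ := this
      exact ⟨n, hxs⟩
    set B : ℕ → Set X := fun n => A n \ ⋃ m ∈ Set.Iio n, A m with hB_def
    have hBclopen : ∀ n, IsClopen (B n) := by
      intro n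
      exact (props' n).1.diff
        ((Set.finite_Iio n).isClopen_biUnion fun m _ => (props' m).1)
    have hBA : ∀ n, B n ⊆ A n := fun n => diff_subset
    have hBmem : ∀ x n, x ∈ B n ↔ x ∈ A n ∧ ∀ m < n, x ∉ A m := by
      intro x n
      simp [hB_def]
    have existsB : ∀ x : X, ∃ n, x ∈ B n := by
      intro x
      classical
      refine ⟨Nat.find (cover' x), (hBmem _ _).mpr ⟨Nat.find_spec (cover' x),
        fun m hm => Nat.find_min (cover' x) hm⟩⟩
    have uniqB : ∀ x m n, x ∈ B m → x ∈ B n → m = n := by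
      intro x m n hm hn
      by_contra hne
      rcases Nat.lt_or_ge m n with hlt | hge
      · exact ((hBmem x n).mp hn).2 m hlt (hBA m hm)
      · have hlt : n < m := lt_of_le_of_ne hge (Ne.symm hne)
        exact ((hBmem x m).mp hm).2 n hlt (hBA n hn)
    set P : ℕ → Prop := fun n => (B n ∩ f ⁻¹' {0}).Nonempty with hP_def
    refine ⟨⋃ n, ⋃ (_ : P n), B n, ?_, ?_, ?_⟩
    · constructor
      · -- closed
        have hcompl : (⋃ n, ⋃ (_ : P n), B n)ᶜ = ⋃ n, ⋃ (_ : ¬ P n), B n := by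
          ext x
          obtain ⟨n₀, hn₀⟩ := existsB x
          simp only [mem_compl_iff, mem_iUnion]
          constructor
          · intro hx
            refine ⟨n₀, fun hP => hx ⟨n₀, hP, hn₀⟩, hn₀⟩
          · rintro ⟨n, hnP, hxn⟩ ⟨m, hmP, hxm⟩
            exact hnP (uniqB x n m hxn hxm ▸ hmP)
        rw [← isOpen_compl_iff, hcompl]
        exact isOpen_iUnion fun n => isOpen_iUnion fun _ => (hBclopen n).isOpen
      · exact isOpen_iUnion fun n => isOpen_iUnion fun _ => (hBclopen n).isOpen
    · -- f⁻¹{0} ⊆ U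
      intro x hx
      obtain ⟨n, hn⟩ := existsB x
      exact mem_iUnion.mpr ⟨n, mem_iUnion.mpr ⟨⟨x, hn, hx⟩, hn⟩⟩
    · -- disjoint from g⁻¹{0}
      rw [Set.disjoint_left]
      intro x hx hxg
      simp only [mem_iUnion] at hx
      obtain ⟨n, hP, hxn⟩ := hx
      obtain ⟨z, hzB, hzf⟩ := hP
      have hzf' : f z = 0 := by simpa using hzf
      have hxg' : g x = 0 := by simpa using hxg
      have hfx : f x ≠ 0 := by
        intro hfx0
        exact hfg x hfx0 hxg'
      have hhz : h z = 0 := by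
        simp [hh_def, hzf']
      have hhx : h x = 1 := by
        simp only [hh_def, hxg', abs_zero, add_zero]
        exact div_self (abs_ne_zero.mpr hfx)
      have := (props' n).2 x (hBA n hxn) z (hBA n hzB)
      rw [hhx, hhz] at this
      norm_num at this
end

section
/- Let E be a Hausdorff space and let X be an E-completely regular space. Then X is E-compact if and only if the following holds: for every Hausdorff space Y and every homeomorphic embedding h : X → Y with dense image such that every continuous f : X → E factors as f = f̃ ∘ h for some continuous f̃ : Y → E, the map h is surjective (hence a homeomorphism of X onto Y). -/
open Topology TopologicalSpace Set

universe u v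

/-- `X` is `E`-completely regular if it is homeomorphic to a subspace of a power
`E^J` for some nonempty index set `J`. -/
def IsECompletelyRegular (E : Type u) (X : Type v)
    [TopologicalSpace E] [TopologicalSpace X] : Prop :=
  ∃ (J : Type (max u v)) (_ : Nonempty J) (e : X → J → E), IsEmbedding e

/-- `X` is `E`-compact if it is homeomorphic to a closed subspace of a power `E^J`
for some nonempty index set `J`. -/
def IsECompact (E : Type u) (X : Type v)
    [TopologicalSpace E] [TopologicalSpace X] : Prop :=
  ∃ (J : Type (max u v)) (_ : Nonempty J) (e : X → J → E),
    IsEmbedding e ∧ IsClosed (Set.range e)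

/-- Let `E` be a Hausdorff space and `X` an `E`-completely regular space.  Then `X`
is `E`-compact if and only if for every Hausdorff space `Y` and every homeomorphic
embedding `h : X → Y` with dense image such that every continuous `f : X → E`
factors as `f = f̃ ∘ h` for some continuous `f̃ : Y → E`, the map `h` is
surjective. -/
theorem stmt5 {E : Type u} {X : Type v} [TopologicalSpace E] [TopologicalSpace X]
    [T2Space E] (hX : IsECompletelyRegular E X) :
    IsECompact E X ↔
    ∀ (Y : Type (max u v)) [TopologicalSpace Y] [T2Space Y] (h : X → Y),
      IsEmbedding h → DenseRange h →
      (∀ f : X → E, Continuous f → ∃ g : Y → E, Continuous g ∧ g ∘ h = f) →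
      Function.Surjective h := by
  constructor
  · rintro ⟨J, ⟨j₀⟩, e, he, hcl⟩ Y _ _ h hemb hdense hext
    choose g hg hgh using fun j =>
      hext (fun x => e x j) ((continuous_apply j).comp he.continuous)
    set G : Y → J → E := fun y j => g j y with hG
    have hGc : Continuous G := continuous_pi fun j => hg j
    have hGh : G ∘ h = e := by
      funext x; funext j
      exact congrFun (hgh j) x
    have hrange : ∀ y, G y ∈ Set.range e := by
      intro y
      have : G y ∈ closure (Set.range (G ∘ h)) :=
        map_mem_closure hGc (hdense y) (by rintro z ⟨x, rfl⟩; exact ⟨x, rfl⟩)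
      rwa [hGh, hcl.closure_eq] at this
    choose φ hφ using fun y => hrange y
    have hφh : ∀ x, φ (h x) = x := by
      intro x
      apply he.injective
      rw [hφ (h x)]
      exact congrFun hGh x
    have hφc : Continuous φ := by
      rw [he.continuous_iff]
      have : e ∘ φ = G := funext fun y => hφ y
      rw [this]; exact hGc
    intro y
    refine ⟨φ y, ?_⟩
    have : h ∘ φ = id :=
      hdense.equalizer (hemb.continuous.comp hφc) continuous_id
        (by funext x; simp [Function.comp, hφh x])
    exact congrFun this y
  · intro cond
    rcases isEmpty_or_nonempty X with hE | hne
    · set e0 : X → PUnit.{max u v + 1} → E := fun x => isEmptyElim x with he0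
      refine ⟨PUnit.{max u v + 1}, ⟨PUnit.unit⟩, e0, .of_subsingleton _, ?_⟩
      rw [Set.range_eq_empty e0]
      exact isClosed_empty
    · obtain ⟨J, ⟨j₀⟩, e, he⟩ := hX
      haveI : Nonempty E := ⟨e (Classical.arbitrary X) j₀⟩
      set F := {f : X → E // Continuous f} with hF
      haveI : Nonempty F := ⟨⟨fun _ => Classical.arbitrary E, continuous_const⟩⟩
      set ev : X → F → E := fun x f => f.1 x with hev
      have hevc : Continuous ev := continuous_pi fun f => f.2
      set π : (F → E) → (J → E) := fun p j => p ⟨fun x => e x j,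
        (continuous_apply j).comp he.continuous⟩ with hπ
      have hπc : Continuous π := continuous_pi fun j => continuous_apply _
      have hπev : π ∘ ev = e := rfl
      have hevEmb : IsEmbedding ev :=
        IsEmbedding.of_comp hevc hπc (hπev ▸ he)
      set Y := closure (Set.range ev) with hY
      set h : X → Y := fun x => ⟨ev x, subset_closure (mem_range_self x)⟩ with hh
      have hhemb : IsEmbedding h := hevEmb.codRestrict _ _
      have hhd : DenseRange h := by
        intro y
        have : (y : F → E) ∈ closure (Subtype.val '' Set.range h) := by
          have himg : Subtype.val '' Set.range h = Set.range ev := by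
            ext p; constructor
            · rintro ⟨q, ⟨x, rfl⟩, rfl⟩; exact ⟨x, rfl⟩
            · rintro ⟨x, rfl⟩; exact ⟨h x, ⟨x, rfl⟩, rfl⟩
          rw [himg]; exact y.2
        rw [IsInducing.subtypeVal.closure_eq_preimage_closure_image]
        exact this
      have hsurj : Function.Surjective h := by
        refine cond Y h hhemb hhd ?_
        intro f hf
        exact ⟨fun y => (y : F → E) ⟨f, hf⟩,
          (continuous_apply _).comp continuous_subtype_val, rfl⟩
      refine ⟨F, ‹Nonempty F›, ev, hevEmb, ?_⟩
      have : closure (Set.range ev) ⊆ Set.range ev := by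
        intro p hp
        obtain ⟨x, hx⟩ := hsurj ⟨p, hp⟩
        exact ⟨x, congrArg Subtype.val hx⟩
      exact closure_subset_iff_isClosed.mp this
end

section
/- Let E be a Hausdorff space, J a nonempty set, and {X_j : j ∈ J} a family of topological spaces. (i) If every X_j is E-compact, then the product space ∏_{j∈J} X_j is E-compact. (ii) If the product ∏_{j∈J} X_j is nonempty and E-compact, then every X_j is E-compact. -/
open Topology TopologicalSpace Set

universe u v w

/-- Let `E` be a Hausdorff space, `ι` a nonempty index set and `X i` a family of
topological spaces. (i) If every `X i` is `E`-compact then so is the product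
`∀ i, X i`. (ii) If the product is nonempty and `E`-compact then every `X i` is
`E`-compact. -/
theorem stmt6 {E : Type u} [TopologicalSpace E] [T2Space E]
    {ι : Type w} [Nonempty ι] (X : ι → Type v) [∀ i, TopologicalSpace (X i)] :
    ((∀ i, IsECompact E (X i)) → IsECompact E (∀ i, X i)) ∧
    (Nonempty (∀ i, X i) → IsECompact E (∀ i, X i) → ∀ i, IsECompact E (X i)) := by
  classical
  constructor
  · intro h
    choose J hJ e he hcl using h
    haveI := hJ
    refine ⟨Σ i, J i, ⟨⟨Classical.arbitrary ι, Classical.arbitrary _⟩⟩,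
      fun x p => e p.1 (x p.1) p.2, ⟨⟨?_⟩, ?_⟩, ?_⟩
    · show Pi.topologicalSpace = _
      simp only [Pi.topologicalSpace, induced_iInf, induced_compose, iInf_sigma]
      refine iInf_congr fun i => ?_
      rw [(he i).eq_induced]
      simp only [Pi.topologicalSpace, induced_iInf, induced_compose]
      rfl
    · intro x y hxy
      funext i
      apply (he i).injective
      funext j
      exact congrFun hxy ⟨i, j⟩
    · have hr : Set.range (fun (x : ∀ i, X i) (p : Σ i, J i) => e p.1 (x p.1) p.2)
          = ⋂ i, (fun (σ : (Σ i, J i) → E) (j : J i) => σ ⟨i, j⟩) ⁻¹' (Set.range (e i)) := by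
        ext σ
        simp only [Set.mem_range, Set.mem_iInter, Set.mem_preimage]
        constructor
        · rintro ⟨x, rfl⟩ i
          exact ⟨x i, rfl⟩
        · intro hσ
          choose x hx using hσ
          exact ⟨x, funext fun p => congrFun (hx p.1) p.2⟩
      rw [hr]
      exact isClosed_iInter fun i =>
        (hcl i).preimage (continuous_pi fun j => continuous_apply _)
  · rintro ⟨p⟩ ⟨J, hJ, e, he, hcl⟩ i
    haveI := hJ
    haveI : T2Space (∀ j, X j) := he.t2Space
    set s : X i → ∀ j, X j := fun x => Function.update p i x with hs
    have hs_cont : Continuous s := continuous_const.update i continuous_id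
    have hsi : ∀ x, s x i = x := fun x => Function.update_self i x p
    have hs_emb : IsEmbedding s := by
      refine IsEmbedding.of_comp hs_cont (continuous_apply i) ?_
      have : (fun q : ∀ j, X j => q i) ∘ s = id := funext hsi
      rw [this]; exact IsEmbedding.id
    have hrange_s : IsClosed (Set.range s) := by
      have hr : Set.range s = {q | s (q i) = q} := by
        ext q
        constructor
        · rintro ⟨x, rfl⟩; simp [hsi]
        · intro hq; exact ⟨q i, hq⟩
      rw [hr]
      exact isClosed_eq (hs_cont.comp (continuous_apply i)) continuous_id
    set f : X i → J → E := fun x => e (s x) with hf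
    have hf_emb : IsEmbedding f := he.comp hs_emb
    have hf_cl : IsClosed (Set.range f) := by
      have hr : Set.range f = e '' Set.range s := by
        rw [← Set.range_comp]; rfl
      rw [hr]
      exact (IsClosedEmbedding.mk he hcl).isClosedMap _ hrange_s
    set φ : J → (X i → E) := fun j x => f x j with hφ
    set e' : X i → (Set.range φ) → E := fun x j' => j'.1 x with he'
    set g : ((Set.range φ) → E) → (J → E) := fun k j => k ⟨φ j, Set.mem_range_self j⟩ with hg
    have hg_cont : Continuous g := continuous_pi fun j => continuous_apply _
    have hcomp : g ∘ e' = f := by funext x j; rfl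
    have he'cont : Continuous e' := by
      apply continuous_pi
      rintro ⟨_, j, rfl⟩
      exact (continuous_apply j).comp hf_emb.continuous
    have hr : Set.range e' = g ⁻¹' (Set.range f) := by
      ext k
      constructor
      · rintro ⟨x, rfl⟩
        exact ⟨x, (congrFun hcomp x).symm⟩
      · rintro ⟨x, hx⟩
        refine ⟨x, ?_⟩
        funext j'
        obtain ⟨j, hj⟩ := j'.2
        have h1 : j' = ⟨φ j, Set.mem_range_self j⟩ := Subtype.ext hj.symm
        calc e' x j' = φ j x := by rw [h1]
          _ = f x j := rfl
          _ = g k j := congrFun hx j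
          _ = k j' := by rw [h1]
    exact ⟨Set.range φ, ⟨⟨φ (Classical.arbitrary J), Set.mem_range_self _⟩⟩, e',
      IsEmbedding.of_comp he'cont hg_cont (hcomp ▸ hf_emb),
      hr ▸ hf_cl.preimage hg_cont⟩
end

section
/- Let E be a nonempty Hausdorff space and let X be an E-completely regular space. Let e : X → E^{C(X,E)} be the evaluation map e(x)(f) = f(x) and let Y be the closure of e[X] in E^{C(X,E)}. Then ⟨Y, e⟩ is a Hewitt E-compact extension of X. Moreover, for every Hewitt E-compact extension ⟨Y', h⟩ of X: (a) there exists a homeomorphism g : Y → Y' with g ∘ e = h (so any two Hewitt E-compact extensions of X are equivalent), and (b) for every E-compact space Z and every continuous f : X → Z there exists a continuous f̃ : Y' → Z with f̃ ∘ h = f. -/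
open Topology TopologicalSpace Set

universe u v w

/-- `⟨Y, h⟩` is a Hewitt `E`-compact extension of `X`: `h` is a homeomorphic
embedding with dense image, `Y` is `E`-compact, and every continuous `f : X → E`
factors continuously through `h`. -/
def IsHewittECompactExtension (E : Type u) (X : Type v) (Y : Type w)
    [TopologicalSpace E] [TopologicalSpace X] [TopologicalSpace Y] (h : X → Y) : Prop :=
  IsEmbedding h ∧ DenseRange h ∧ IsECompact E Y ∧
    ∀ f : X → E, Continuous f → ∃ g : Y → E, Continuous g ∧ g ∘ h = f

/-- The evaluation map `x ↦ (f ↦ f x)` from `X` into `E^{C(X,E)}`. -/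
def contEval (E : Type u) (X : Type v) [TopologicalSpace E] [TopologicalSpace X] :
    X → (C(X, E) → E) := fun x f => f x

/-- The corestriction of the evaluation map to the closure of its range. -/
def contEvalK (E : Type u) (X : Type v) [TopologicalSpace E] [TopologicalSpace X] :
    X → ↥(closure (Set.range (contEval E X))) :=
  fun x => ⟨contEval E X x, subset_closure ⟨x, rfl⟩⟩

/-! A continuous map from `X` to a power `E^J` extends over a Hewitt extension coordinatewise.
If `Z` sits in `E^J` as a closed subspace, the extension of `X → Z ⊆ E^J` still lands in `Z`, since
it does so on the dense image of `X`. Hence any two Hewitt extensions extend into each other, and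
both composites agree with the identity on a dense image, hence everywhere by Hausdorffness. The
evaluation map is an embedding because the embedding `X → E^J` factors through it. -/

section Extension

variable {E : Type u} [TopologicalSpace E] {X : Type v}

theorem IsECompact.t2Space {Y : Type w} [TopologicalSpace Y] [T2Space E]
    (hY : IsECompact E Y) : T2Space Y := by
  obtain ⟨J, -, e, he, -⟩ := hY
  exact he.t2Space

theorem IsClosed.isECompact {J : Type (max u w)} [Nonempty J] {s : Set (J → E)}
    (hs : IsClosed s) : IsECompact E s :=
  ⟨J, inferInstance, Subtype.val, .subtypeVal, by rwa [Subtype.range_val]⟩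

theorem IsClosedEmbedding.exists_continuous_comp_eq_of_denseRange {Y Z W : Type*}
    [TopologicalSpace Y] [TopologicalSpace Z] [TopologicalSpace W] {ι : Z → W}
    (hι : IsClosedEmbedding ι) {h : X → Y} (hh : DenseRange h) {G : Y → W} (hG : Continuous G)
    {f : X → Z} (hGh : G ∘ h = ι ∘ f) : ∃ g : Y → Z, Continuous g ∧ g ∘ h = f := by
  have hrange : ∀ y, G y ∈ range ι := by
    have hsub : range h ⊆ G ⁻¹' range ι := by
      rintro _ ⟨x, rfl⟩
      exact ⟨f x, (congrFun hGh x).symm⟩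
    exact fun y => closure_minimal hsub (hι.isClosed_range.preimage hG) (hh y)
  choose g hg using hrange
  have hιg : ι ∘ g = G := funext hg
  refine ⟨g, hι.isInducing.continuous_iff.mpr (hιg ▸ hG), funext fun x => hι.injective ?_⟩
  exact (hg (h x)).trans (congrFun hGh x)

theorem IsHewittECompactExtension.exists_continuous_comp_eq [TopologicalSpace X] {Y Z : Type*}
    [TopologicalSpace Y] [TopologicalSpace Z] {h : X → Y} (hh : IsHewittECompactExtension E X Y h)
    (hZ : IsECompact E Z) {f : X → Z} (hf : Continuous f) :
    ∃ g : Y → Z, Continuous g ∧ g ∘ h = f := by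
  obtain ⟨-, hdense, -, hfactor⟩ := hh
  obtain ⟨J, -, ι, hι, hιc⟩ := hZ
  choose G hG hGh using fun j : J =>
    hfactor (fun x => ι (f x) j) ((continuous_apply j).comp (hι.continuous.comp hf))
  exact IsClosedEmbedding.exists_continuous_comp_eq_of_denseRange ⟨hι, hιc⟩ hdense
    (continuous_pi hG) (funext fun x => funext fun j => congrFun (hGh j) x)

theorem exists_homeomorph_comp_eq_of_denseRange {Y₁ Y₂ : Type*} [TopologicalSpace Y₁]
    [TopologicalSpace Y₂] [T2Space Y₁] [T2Space Y₂] {h₁ : X → Y₁} {h₂ : X → Y₂}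
    (hd₁ : DenseRange h₁) (hd₂ : DenseRange h₂) {φ : Y₁ → Y₂} {ψ : Y₂ → Y₁}
    (hφ : Continuous φ) (hψ : Continuous ψ) (hφh : φ ∘ h₁ = h₂) (hψh : ψ ∘ h₂ = h₁) :
    ∃ g : Y₁ ≃ₜ Y₂, ∀ x, g (h₁ x) = h₂ x := by
  have hψφ : ψ ∘ φ = id :=
    hd₁.equalizer (hψ.comp hφ) continuous_id (by rw [Function.comp_assoc, hφh, hψh]; rfl)
  have hφψ : φ ∘ ψ = id :=
    hd₂.equalizer (hφ.comp hψ) continuous_id (by rw [Function.comp_assoc, hψh, hφh]; rfl)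
  exact ⟨⟨⟨φ, ψ, congrFun hψφ, congrFun hφψ⟩, hφ, hψ⟩, congrFun hφh⟩

end Extension

section Evaluation

variable {E : Type u} {X : Type v} [TopologicalSpace E] [TopologicalSpace X]

theorem isEmbedding_contEval (hX : IsECompletelyRegular E X) : IsEmbedding (contEval E X) := by
  obtain ⟨J, -, e, he⟩ := hX
  let coord : (C(X, E) → E) → J → E :=
    fun F j => F ⟨fun x => e x j, (continuous_apply j).comp he.continuous⟩
  exact IsEmbedding.of_comp (continuous_pi fun f => f.continuous)
    (continuous_pi fun _ => continuous_apply _) (g := coord) he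

theorem denseRange_contEvalK : DenseRange (contEvalK E X) := by
  intro y
  rw [closure_subtype, ← range_comp]
  exact y.2

theorem isHewittECompactExtension_contEvalK [Nonempty E] (hX : IsECompletelyRegular E X) :
    IsHewittECompactExtension E X (closure (range (contEval E X))) (contEvalK E X) := by
  have : Nonempty C(X, E) := ⟨.const X (Classical.arbitrary E)⟩
  refine ⟨(isEmbedding_contEval hX).codRestrict _ fun x => subset_closure (mem_range_self x),
    denseRange_contEvalK, isClosed_closure.isECompact, fun f hf => ?_⟩
  exact ⟨fun y => y.1 ⟨f, hf⟩, (continuous_apply _).comp continuous_subtype_val, rfl⟩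

end Evaluation

/-- For a nonempty Hausdorff space `E` and an `E`-completely regular space `X`, the
closure `Y` of the image of the evaluation map `X → E^{C(X,E)}`, together with the
evaluation map, is a Hewitt `E`-compact extension of `X`; moreover for every Hewitt
`E`-compact extension `⟨Y', h⟩` of `X` there is a homeomorphism `g : Y ≃ₜ Y'` with
`g ∘ e = h`, and every continuous map from `X` to an `E`-compact space `Z` factors
continuously through `h`. -/
theorem stmt7 {E : Type u} {X : Type v} [TopologicalSpace E] [TopologicalSpace X]
    [T2Space E] [Nonempty E] (hX : IsECompletelyRegular E X) :
    IsHewittECompactExtension E X ↥(closure (Set.range (contEval E X))) (contEvalK E X) ∧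
    ∀ (Y' : Type (max u v)) [TopologicalSpace Y'] (h : X → Y'),
      IsHewittECompactExtension E X Y' h →
      ((∃ g : ↥(closure (Set.range (contEval E X))) ≃ₜ Y',
          ∀ x : X, g (contEvalK E X x) = h x) ∧
       (∀ (Z : Type (max u v)) [TopologicalSpace Z], IsECompact E Z →
          ∀ f : X → Z, Continuous f → ∃ g : Y' → Z, Continuous g ∧ g ∘ h = f)) := by
  have hY := isHewittECompactExtension_contEvalK hX
  refine ⟨hY, fun Y' _ h hh => ⟨?_, fun Z _ hZ f hf => hh.exists_continuous_comp_eq hZ hf⟩⟩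
  have ⟨hYe, hYd, hYc, _⟩ := hY
  have ⟨hhe, hhd, hhc, _⟩ := hh
  have := hhc.t2Space
  obtain ⟨φ, hφ, hφh⟩ := hY.exists_continuous_comp_eq hhc hhe.continuous
  obtain ⟨ψ, hψ, hψh⟩ := hh.exists_continuous_comp_eq hYc hYe.continuous
  exact exists_homeomorph_comp_eq_of_denseRange hYd hhd hφ hψ hφh hψh
end
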